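/- arXiv:1609.08837 — 2 statements merged into one kernel-verified Lean document; each statement's English description precedes it below -/
import Mathlib

section
/- Let (A,E) = *_D (A_k, E_k) be a reduced amalgamated free product and P_k ∈ L(Y) the canonical projections. Then: (i) each P_k commutes with D; (ii) every a ∈ A_k satisfies P_k^⊥ a P_k^⊥ = E(a) P_k^⊥ and a° P_k^⊥ = P_k° a P_k^⊥, where a° = a − E(a) and P_k° = P_k − e_{A_k}; (iii) the compression L(Y) → L(η_k A_k) ≅ A_k by the Jones projection e_{A_k} defines a conditional expectation from ΔT(A,E) onto A_k extending E_{A_k}. -/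
/-! ### Common interface definitions for C*-algebra theory -/

noncomputable section

open scoped ENNReal NNReal

universe u v w

/-- An element of a *-algebra is *C*-positive* if it is of the form `star y * y`. -/
def IsCStarPos {A : Type*} [Mul A] [Star A] (x : A) : Prop := ∃ y : A, x = star y * y

/-- The canonical C*-norm of a matrix over a C*-algebra, computed via the action of the
matrix algebra on the Hilbert module `Aⁿ`. -/
def cstarMatNorm {A : Type*} [Norm A] [NonUnitalRing A] [Star A] {n : ℕ}
    (M : Matrix (Fin n) (Fin n) A) : ℝ :=
  sSup { r : ℝ | 0 ≤ r ∧ ∃ b : Fin n → A, ‖∑ i, star (b i) * b i‖ ≤ 1 ∧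
    r ^ 2 = ‖∑ i, star (∑ j, M i j * b j) * (∑ j, M i j * b j)‖ }

/-- A linear map between *-algebras is completely positive if all of its matrix
amplifications are positive; equivalently (as formulated here, avoiding norms on matrix
algebras), all sums `∑ᵢⱼ bᵢ* φ(aᵢ* aⱼ) bⱼ` are positive. -/
def IsCPMap {A B : Type*} [NonUnitalRing A] [Star A] [NonUnitalRing B] [Star B]
    [Module ℂ A] [Module ℂ B] (φ : A →ₗ[ℂ] B) : Prop :=
  ∀ (n : ℕ) (a : Fin n → A) (b : Fin n → B),
    IsCStarPos (∑ i, ∑ j, star (b i) * φ (star (a i) * a j) * b j)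

/-- A (bounded, completely positive, star-preserving) conditional expectation onto the
subalgebra `ι : D → A` of a unital C*-algebra `A`. -/
structure CondExp (D : Type u) (A : Type v) [CStarAlgebra D] [CStarAlgebra A]
    (ι : D →⋆ₐ[ℂ] A) : Type (max u v) where
  toMap : A →ₗ[ℂ] D
  map_star : ∀ a, toMap (star a) = star (toMap a)
  retract : ∀ d, toMap (ι d) = d
  bimod : ∀ (d : D) (a : A) (d' : D), toMap (ι d * a * ι d') = d * toMap a * d'
  cp : IsCPMap toMap
  contractive : ∀ a, ‖toMap a‖ ≤ ‖a‖

/-- Nondegeneracy (= faithfulness of the GNS representation) of a conditional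
expectation. -/
def CondExp.Nondeg {D : Type u} {A : Type v} [CStarAlgebra D] [CStarAlgebra A]
    {ι : D →⋆ₐ[ℂ] A} (E : CondExp D A ι) : Prop :=
  ∀ a : A, (∀ b : A, E.toMap (star (a * b) * (a * b)) = 0) → a = 0

/-- A subset of a unital C*-algebra generates it (as a C*-algebra) if the star subalgebra
it generates is dense. -/
def GeneratesCStar {A : Type*} [CStarAlgebra A] (S : Set A) : Prop :=
  Dense ((StarAlgebra.adjoin ℂ S : StarSubalgebra ℂ A) : Set A)

/-- A subset of a C*-algebra generates it as a non-unital C*-algebra if the non-unital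
star subalgebra it generates is dense. -/
def GeneratesCStarNU {A : Type*} [NonUnitalCStarAlgebra A] (S : Set A) : Prop :=
  Dense ((NonUnitalStarAlgebra.adjoin ℂ S : NonUnitalStarSubalgebra ℂ A) : Set A)

/-- The reduced amalgamated free product `(A, E) = *_D (A_k, E_k)` of a family of unital
inclusions `D ⊆ A k` with conditional expectations `E k`, realized on the C*-algebra
`FP`: it is generated by copies of the `A k` agreeing on `D`, carries a nondegenerate
conditional expectation `E` onto `D` restricting to the `E k` on each `A k`, and `E`
vanishes on all reduced words.  These properties determine `(FP, E)` up to isomorphism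
fixing the `A k`. -/
structure ReducedAFP {I : Type w} {D : Type u} [CStarAlgebra D] {A : I → Type u}
    [∀ i, CStarAlgebra (A i)] (ι : ∀ i, D →⋆ₐ[ℂ] A i) (Ek : ∀ i, CondExp D (A i) (ι i))
    (FP : Type u) [CStarAlgebra FP] : Type (max u w) where
  incl : ∀ i, A i →⋆ₐ[ℂ] FP
  incl_injective : ∀ i, Function.Injective (incl i)
  inclD : D →⋆ₐ[ℂ] FP
  compat : ∀ i d, incl i (ι i d) = inclD d
  generates : GeneratesCStar (⋃ i, Set.range (incl i))
  Exp : CondExp D FP inclD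
  Exp_restrict : ∀ i a, Exp.toMap (incl i a) = (Ek i).toMap a
  Exp_nondeg : Exp.Nondeg
  freeness : ∀ (m : ℕ) (idx : Fin (m + 1) → I) (a : ∀ k, A (idx k)),
    (∀ k, (Ek (idx k)).toMap (a k) = 0) →
    (∀ k : Fin m, idx k.castSucc ≠ idx k.succ) →
    Exp.toMap ((List.ofFn fun k => incl (idx k) (a k)).prod) = 0

/-- The canonical conditional expectation `E_{A_k} : A → A_k` of a reduced amalgamated
free product onto one of its free factors: it restricts to the identity on `A_k`, kills
all reduced words of length `≥ 2` as well as the length-one reduced words from the other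
factors, and satisfies `E = E_k ∘ E_{A_k}`. -/
structure FactorExp {I : Type w} {D : Type u} [CStarAlgebra D] {A : I → Type u}
    [∀ i, CStarAlgebra (A i)] {ι : ∀ i, D →⋆ₐ[ℂ] A i} {Ek : ∀ i, CondExp D (A i) (ι i)}
    {FP : Type u} [CStarAlgebra FP] (R : ReducedAFP ι Ek FP) (k : I) :
    Type (max u w) where
  toCondExp : CondExp (A k) FP (R.incl k)
  factors : ∀ x : FP, R.Exp.toMap x = (Ek k).toMap (toCondExp.toMap x)
  kills : ∀ (m : ℕ) (idx : Fin (m + 1) → I) (a : ∀ j, A (idx j)),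
    (∀ j, (Ek (idx j)).toMap (a j) = 0) →
    (∀ j : Fin m, idx j.castSucc ≠ idx j.succ) → (1 ≤ m ∨ idx 0 ≠ k) →
    toCondExp.toMap ((List.ofFn fun j => R.incl (idx j) (a j)).prod) = 0

/-- The Bass–Serre algebra `ΔT(A, E)` of a reduced amalgamated free product `R`,
characterized by its universal property (Corollary 4.4 of the paper): it contains the
reduced amalgamated free product `FP` faithfully, carries pairwise orthogonal projections
`P k` (summing to `1` when `I` is finite) whose complements `e_k = 1 - P k` satisfy the
Jones relation `e_k a e_k = E_k(a) e_k` for `a ∈ A_k`, it is generated by `FP` together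
with the `P k`, and it is universal for these relations. -/
structure BassSerre {I : Type w} {D : Type u} [CStarAlgebra D] {A : I → Type u}
    [∀ i, CStarAlgebra (A i)] {ι : ∀ i, D →⋆ₐ[ℂ] A i} {Ek : ∀ i, CondExp D (A i) (ι i)}
    {FP : Type u} [CStarAlgebra FP] (R : ReducedAFP ι Ek FP)
    (Δ : Type u) [CStarAlgebra Δ] : Type (max (u + 1) w) where
  emb : FP →⋆ₐ[ℂ] Δ
  emb_injective : Function.Injective emb
  P : I → Δ
  P_sa : ∀ i, star (P i) = P i
  P_idem : ∀ i, P i * P i = P i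
  P_orth : ∀ i j, i ≠ j → P i * P j = 0
  P_sum : ∀ s : Finset I, (∀ i, i ∈ s) → ∑ i ∈ s, P i = 1
  jones : ∀ i (a : A i),
    (1 - P i) * emb (R.incl i a) * (1 - P i) = emb (R.inclD ((Ek i).toMap a)) * (1 - P i)
  generates : GeneratesCStar (Set.range emb ∪ Set.range P)
  universal : ∀ (C : Type u) [CStarAlgebra C] (ψ : ∀ i, A i →⋆ₐ[ℂ] C),
    (∀ i j d, ψ i (ι i d) = ψ j (ι j d)) → ∀ q : I → C,
    (∀ i, star (q i) = q i) → (∀ i, q i * q i = q i) → (∀ i j, i ≠ j → q i * q j = 0) →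
    (∀ s : Finset I, (∀ i, i ∈ s) → ∑ i ∈ s, q i = 1) →
    (∀ i a, (1 - q i) * ψ i a * (1 - q i) = ψ i (ι i ((Ek i).toMap a)) * (1 - q i)) →
    ∃! ρ : Δ →⋆ₐ[ℂ] C, (∀ i a, ρ (emb (R.incl i a)) = ψ i a) ∧ ∀ i, ρ (P i) = q i

/-- Nuclearity of a C*-algebra: the identity map is a pointwise-norm limit of
compositions of completely positive contractions through matrix algebras. -/
def IsNuclearCStar (A : Type u) [NonUnitalCStarAlgebra A] : Prop :=
  ∀ (F : Finset A) (ε : ℝ), 0 < ε → ∃ (n : ℕ) (φ : A →ₗ[ℂ] Matrix (Fin n) (Fin n) ℂ)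
    (ψ : Matrix (Fin n) (Fin n) ℂ →ₗ[ℂ] A), IsCPMap φ ∧ IsCPMap ψ ∧
    (∀ a, cstarMatNorm (φ a) ≤ ‖a‖) ∧ (∀ M, ‖ψ M‖ ≤ cstarMatNorm M) ∧
    ∀ a ∈ F, ‖ψ (φ a) - a‖ ≤ ε

/-- A nuclear embedding of a C*-algebra into another C*-algebra: an injective
*-homomorphism which is a pointwise-norm limit of completely positive contractions
factoring through matrix algebras.  By Kirchberg's theorem, a C*-algebra admits such
an embedding if and only if it is exact. -/
structure NuclearEmbedding (A : Type u) [NonUnitalCStarAlgebra A] : Type (u + 1) where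
  B : Type u
  [instB : NonUnitalCStarAlgebra B]
  θ : A →⋆ₙₐ[ℂ] B
  injective : Function.Injective θ
  nuclear : ∀ (F : Finset A) (ε : ℝ), 0 < ε → ∃ (n : ℕ)
    (φ : A →ₗ[ℂ] Matrix (Fin n) (Fin n) ℂ) (ψ : Matrix (Fin n) (Fin n) ℂ →ₗ[ℂ] B),
    IsCPMap φ ∧ IsCPMap ψ ∧ (∀ a, cstarMatNorm (φ a) ≤ ‖a‖) ∧
    (∀ M, ‖ψ M‖ ≤ cstarMatNorm M) ∧ ∀ a ∈ F, ‖ψ (φ a) - θ a‖ ≤ ε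

/-- Exactness of a C*-algebra, in the form of Kirchberg's nuclear-embeddability
characterization. -/
def IsExactCStar (A : Type u) [NonUnitalCStarAlgebra A] : Prop :=
  Nonempty (NuclearEmbedding A)

/-- `A` has the completely bounded approximation property with constant `C`: the
identity is a pointwise-norm limit of finite-rank maps which are completely bounded
with cb-norm at most `C`. -/
def CBAPBound (A : Type u) [NonUnitalCStarAlgebra A] (C : ℝ) : Prop :=
  ∀ (F : Finset A) (ε : ℝ), 0 < ε → ∃ φ : A →ₗ[ℂ] A,
    FiniteDimensional ℂ (LinearMap.range φ) ∧
    (∀ (n : ℕ) (M : Matrix (Fin n) (Fin n) A),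
      cstarMatNorm (M.map φ) ≤ C * cstarMatNorm M) ∧
    ∀ a ∈ F, ‖φ a - a‖ ≤ ε

/-- The Haagerup constant `Λ_cb(A)` of a C*-algebra (`∞` if `A` fails the CBAP). -/
def LambdaCB (A : Type u) [NonUnitalCStarAlgebra A] : ℝ≥0∞ :=
  sInf {c : ℝ≥0∞ | ∃ r : ℝ≥0, c = (r : ℝ≥0∞) ∧ CBAPBound A (r : ℝ)}

end


/-! ### Hilbert C*-modules (interface) -/

noncomputable section

universe u v w

/-- Interface for a Hilbert C*-module structure over the C*-algebra `D` on the complex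
Banach space `X`: a right `D`-action and a `D`-valued inner product, compatible with the
norm of `X`. -/
structure HilbMod (D : Type u) [CStarAlgebra D] (X : Type v) [NormedAddCommGroup X]
    [NormedSpace ℂ X] [CompleteSpace X] : Type (max u v) where
  rsmul : X →ₗ[ℂ] D →ₗ[ℂ] X
  inner : X → X → D
  inner_add_right : ∀ x y z, inner x (y + z) = inner x y + inner x z
  inner_smul_right : ∀ (c : ℂ) (x y : X), inner x (c • y) = c • inner x y
  inner_rsmul_right : ∀ x y d, inner x (rsmul y d) = inner x y * d
  star_inner : ∀ x y, star (inner x y) = inner y x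
  inner_pos : ∀ x, IsCStarPos (inner x x)
  norm_inner : ∀ x, ‖x‖ ^ 2 = ‖inner x x‖
  rsmul_assoc : ∀ x d e, rsmul (rsmul x d) e = rsmul x (d * e)
  rankOne_exists : ∀ ξ η : X, ∃ T : X →L[ℂ] X, ∀ ζ, T ζ = rsmul ξ (inner η ζ)

namespace HilbMod

variable {D : Type u} [CStarAlgebra D] {X : Type v} [NormedAddCommGroup X]
  [NormedSpace ℂ X] [CompleteSpace X] {Y : Type w} [NormedAddCommGroup Y]
  [NormedSpace ℂ Y] [CompleteSpace Y]

/-- An operator between Hilbert C*-modules is adjointable if it has an adjoint with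
respect to the inner products. -/
def AdjointablePair (MX : HilbMod D X) (MY : HilbMod D Y) (T : X →L[ℂ] Y) : Prop :=
  ∃ S : Y →L[ℂ] X, ∀ x y, MY.inner (T x) y = MX.inner x (S y)

/-- Adjointable operators on a Hilbert C*-module. -/
def Adjointable (M : HilbMod D X) (T : X →L[ℂ] X) : Prop := AdjointablePair M M T

/-- The adjoint of an (adjointable) operator. -/
def adj (M : HilbMod D X) (T : X →L[ℂ] X) : X →L[ℂ] X :=
  letI := Classical.propDecidable (M.Adjointable T)
  if h : M.Adjointable T then h.choose else 0

/-- "Rank-one" operators `θ_{ξ,η} : ζ ↦ ξ ⬝ ⟨η, ζ⟩` between Hilbert C*-modules.-/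
def IsRankOnePair (MX : HilbMod D X) (MY : HilbMod D Y) (T : X →L[ℂ] Y) : Prop :=
  ∃ (ξ : Y) (η : X), ∀ ζ, T ζ = MY.rsmul ξ (MX.inner η ζ)

/-- Compact operators between Hilbert C*-modules: norm limits of sums of rank-one
operators. -/
def IsCompactPair (MX : HilbMod D X) (MY : HilbMod D Y) (T : X →L[ℂ] Y) : Prop :=
  T ∈ closure
    ((Submodule.span ℂ {S : X →L[ℂ] Y | IsRankOnePair MX MY S} : Submodule ℂ _) : Set _)

/-- Compact operators on a Hilbert C*-module. -/
def IsCompactOp (M : HilbMod D X) (T : X →L[ℂ] X) : Prop := IsCompactPair M M T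

end HilbMod

/-- A representation of the C*-algebra `A` by adjointable operators on a Hilbert
C*-module (not necessarily unital). -/
structure RepOn (A : Type w) [NonUnitalCStarAlgebra A] {D : Type u} [CStarAlgebra D]
    {X : Type v} [NormedAddCommGroup X] [NormedSpace ℂ X] [CompleteSpace X]
    (M : HilbMod D X) : Type (max u v w) where
  act : A →ₗ[ℂ] X →L[ℂ] X
  act_mul : ∀ a b, act (a * b) = (act a).comp (act b)
  act_star : ∀ (a : A) (x y : X), M.inner (act a x) y = M.inner x (act (star a) y)
  act_rsmul : ∀ (a : A) (x : X) (d : D), act a (M.rsmul x d) = M.rsmul (act a x) d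

/-- A unital representation. -/
def RepOn.Unital {A : Type w} [CStarAlgebra A] {D : Type u} [CStarAlgebra D] {X : Type v}
    [NormedAddCommGroup X] [NormedSpace ℂ X] [CompleteSpace X] {M : HilbMod D X}
    (π : RepOn A M) : Prop := π.act 1 = ContinuousLinearMap.id ℂ X

/-- Faithfulness (injectivity) of a representation. -/
def RepOn.Faithful {A : Type w} [NonUnitalCStarAlgebra A] {D : Type u} [CStarAlgebra D]
    {X : Type v} [NormedAddCommGroup X] [NormedSpace ℂ X] [CompleteSpace X]
    {M : HilbMod D X} (π : RepOn A M) : Prop := ∀ a, π.act a = 0 → a = 0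

end


/-! ### GNS representations of conditional expectations (interface) -/

noncomputable section

universe u v w

/-- The GNS representation `(X, φ_X, ξ₀)` of a conditional expectation `E : A → D`:
a Hilbert `D`-module `X` with a unital representation of `A` and a cyclic vector `ξ₀`
implementing `E`, together with the Jones projection `e_D : x ↦ ξ₀ ⬝ ⟨ξ₀, x⟩`. -/
structure GNSRep {D : Type u} {A : Type w} [CStarAlgebra D] [CStarAlgebra A]
    (ι : D →⋆ₐ[ℂ] A) (E : CondExp D A ι) (X : Type v) [NormedAddCommGroup X]
    [NormedSpace ℂ X] [CompleteSpace X] : Type (max u v w) where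
  mod : HilbMod D X
  rep : RepOn A mod
  rep_unital : rep.Unital
  cyc : X
  cyclic : Dense (Set.range fun a : A => rep.act a cyc)
  inner_cyc : ∀ a b : A, mod.inner (rep.act a cyc) (rep.act b cyc) = E.toMap (star a * b)
  cyc_rsmul : ∀ d : D, mod.rsmul cyc d = rep.act (ι d) cyc
  jones : X →L[ℂ] X
  jones_apply : ∀ x, jones x = mod.rsmul cyc (mod.inner cyc x)

namespace GNSRep

variable {D : Type u} {A : Type w} [CStarAlgebra D] [CStarAlgebra A] {ι : D →⋆ₐ[ℂ] A}
  {E : CondExp D A ι} {X : Type v} [NormedAddCommGroup X] [NormedSpace ℂ X]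
  [CompleteSpace X]

/-- The orthogonal complement `X° = X ⊖ ξ₀D` of the cyclic submodule. -/
def XcircSet (G : GNSRep ι E X) : Set X := {x | G.mod.inner G.cyc x = 0}

/-- Rank-one operators with both legs in `X°`. -/
def IsRankOneCirc (G : GNSRep ι E X) (T : X →L[ℂ] X) : Prop :=
  ∃ ξ ∈ G.XcircSet, ∃ η ∈ G.XcircSet, ∀ ζ, T ζ = G.mod.rsmul ξ (G.mod.inner η ζ)

/-- The compact operators `K(X°) ⊆ K(X)`, i.e. limits of sums of rank-one operators
with legs in `X°`. -/
def IsCompactCirc (G : GNSRep ι E X) (T : X →L[ℂ] X) : Prop :=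
  T ∈ closure
    ((Submodule.span ℂ {S : X →L[ℂ] X | G.IsRankOneCirc S} : Submodule ℂ _) : Set _)

end GNSRep

end


/-! ### Statement 2

Properties of the canonical projections `P_k ∈ L(Y)` of the Bass–Serre algebra
`ΔT(A,E) = C*(φ_Y(A), {P_k})`: they commute with `D`; `P_k^⊥ a P_k^⊥ = E(a) P_k^⊥`
and `a° P_k^⊥ = P_k° a P_k^⊥` for `a ∈ A_k` (where `P_k° = P_k - e_{A_k}`); and
compression by the Jones projection `e_{A_k}` defines a conditional expectation
`ΔT(A,E) → A_k` extending `E_{A_k}`.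

Since `L(Y) = L(⊞_k Y_k) ≅ ∏_k L(Y_k)`, the concrete realization of `ΔT(A,E)` on `Y`
is encoded as a faithful family of representations `σ_k` on the GNS modules `Y_k` of
the canonical conditional expectations `E_{A_k} : A → A_k`, under which the copy of
`A` acts by the GNS representations, and the `P_k` act as the projections onto the
closed submodules spanned by `η_k A_k` and the reduced words beginning in `A_k°`. -/

noncomputable section

universe u v w

/-- The concrete realization of `ΔT(A,E)` on the Hilbert module `Y = ⊞_k Y_k`. -/
structure ConcreteDeltaT {I : Type w} {D : Type u} [CStarAlgebra D] {A : I → Type u}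
    [∀ i, CStarAlgebra (A i)] {ι : ∀ i, D →⋆ₐ[ℂ] A i} {Ek : ∀ i, CondExp D (A i) (ι i)}
    {FP : Type u} [CStarAlgebra FP] (R : ReducedAFP ι Ek FP)
    (Fexp : ∀ k, FactorExp R k) (Y : I → Type v) [∀ k, NormedAddCommGroup (Y k)]
    [∀ k, NormedSpace ℂ (Y k)] [∀ k, CompleteSpace (Y k)]
    (Gns : ∀ k, GNSRep (R.incl k) (Fexp k).toCondExp (Y k))
    (Δ : Type u) [CStarAlgebra Δ] : Type (max u v w) where
  emb : FP →⋆ₐ[ℂ] Δ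
  emb_injective : Function.Injective emb
  /-- the component representations `σ_k : ΔT(A,E) → L(Y_k)` -/
  σrep : ∀ k, RepOn Δ (Gns k).mod
  σrep_unital : ∀ k, (σrep k).Unital
  σ_emb : ∀ k (x : FP), (σrep k).act (emb x) = (Gns k).rep.act x
  faithful_family : ∀ δ : Δ, (∀ k, (σrep k).act δ = 0) → δ = 0
  P : I → Δ
  P_sa : ∀ k, star (P k) = P k
  P_idem : ∀ k, P k * P k = P k
  /-- `P_k` fixes the vector `η_k` … -/
  P_cyc_self : ∀ k, (σrep k).act (P k) (Gns k).cyc = (Gns k).cyc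
  /-- … kills the vectors `η_j`, `j ≠ k` … -/
  P_cyc_ne : ∀ j k, j ≠ k → (σrep j).act (P k) (Gns j).cyc = 0
  /-- … fixes reduced words beginning in `A_k°` … -/
  P_word_fix : ∀ (j k : I) (m : ℕ) (idx : Fin (m + 1) → I) (a : ∀ t, A (idx t)),
    (∀ t, (Ek (idx t)).toMap (a t) = 0) →
    (∀ t : Fin m, idx t.castSucc ≠ idx t.succ) → idx 0 = k →
    (σrep j).act (P k) ((Gns j).rep.act
        ((List.ofFn fun t => R.incl (idx t) (a t)).prod) (Gns j).cyc) =
      (Gns j).rep.act ((List.ofFn fun t => R.incl (idx t) (a t)).prod) (Gns j).cyc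
  /-- … and kills reduced words beginning elsewhere. -/
  P_word_kill : ∀ (j k : I) (m : ℕ) (idx : Fin (m + 1) → I) (a : ∀ t, A (idx t)),
    (∀ t, (Ek (idx t)).toMap (a t) = 0) →
    (∀ t : Fin m, idx t.castSucc ≠ idx t.succ) → idx 0 ≠ k →
    (σrep j).act (P k) ((Gns j).rep.act
        ((List.ofFn fun t => R.incl (idx t) (a t)).prod) (Gns j).cyc) = 0
  generates : GeneratesCStar (Set.range emb ∪ Set.range P)


/-! Everything is tested on the dense set of vectors `d L η_j` (`d ∈ D`, `L` a reduced word) in the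
components `Y_j`, on which `P_k` acts as `1` or `0` according to whether `L` starts in `A_k` (for
the empty word: whether `j = k`). Multiplying by `d ∈ D` does not change where a word starts,
which gives (i). For `a ∈ A_k` and `v` not starting in `A_k`, `a v = a° v + E(a) v`, where `a° v`
is a reduced word of length `≥ 2` starting in `A_k`, hence fixed by `P_k` and orthogonal to `η_k`,
while `E(a) v` again does not start in `A_k`. So `a° P_k^⊥ = P_k a P_k^⊥` and
`e_{A_k} a P_k^⊥ = 0`, and (ii) follows algebraically. In (iii) the compression is the vector map
`δ ↦ ⟨η_k, δ η_k⟩`, which is completely positive and unital, hence contractive by the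
Kadison–Schwarz inequality. -/

section CompletelyPositive

variable {B C : Type*} [CStarAlgebra B] [CStarAlgebra C] {φ : B →ₗ[ℂ] C}

theorem IsCStarPos.nonneg [PartialOrder C] [StarOrderedRing C] {c : C} (hc : IsCStarPos c) :
    0 ≤ c := by
  obtain ⟨y, rfl⟩ := hc
  exact star_mul_self_nonneg y

theorem IsCPMap.isCStarPos_map_star_mul_self (hφ : IsCPMap φ) (b : B) :
    IsCStarPos (φ (star b * b)) := by
  simpa using hφ 1 ![b] ![1]

theorem IsCPMap.monotone [PartialOrder B] [StarOrderedRing B] [PartialOrder C]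
    [StarOrderedRing C] (hφ : IsCPMap φ) : Monotone φ := by
  intro x y hxy
  obtain ⟨z, hz⟩ := CStarAlgebra.nonneg_iff_eq_star_mul_self.1 (sub_nonneg.2 hxy)
  rw [← sub_nonneg, ← map_sub, hz]
  exact (hφ.isCStarPos_map_star_mul_self z).nonneg

/-- Kadison–Schwarz, from the positivity of the matrix `[[1, b], [b*, b* b]]`. -/
theorem IsCPMap.isCStarPos_sub_star_mul_self (hφ : IsCPMap φ) (h1 : φ 1 = 1)
    (hstar : ∀ b, φ (star b) = star (φ b)) (b : B) :
    IsCStarPos (φ (star b * b) - star (φ b) * φ b) := by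
  convert hφ 2 ![1, b] ![-φ b, 1] using 1
  simp only [Fin.sum_univ_two, Matrix.cons_val_zero, Matrix.cons_val_one,
    star_one, one_mul, mul_one, h1, hstar]
  noncomm_ring

theorem LinearMap.map_algebraMap_of_map_one (h1 : φ 1 = 1) (r : ℝ) :
    φ (algebraMap ℝ B r) = algebraMap ℝ C r := by
  rw [Algebra.algebraMap_eq_smul_one, Algebra.algebraMap_eq_smul_one,
    LinearMap.map_smul_of_tower, h1]

theorem IsCPMap.norm_map_le (hφ : IsCPMap φ) (h1 : φ 1 = 1)
    (hstar : ∀ b, φ (star b) = star (φ b)) (b : B) : ‖φ b‖ ≤ ‖b‖ := by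
  let := CStarAlgebra.spectralOrder B
  let := CStarAlgebra.spectralOrder C
  have := CStarAlgebra.spectralOrderedRing B
  have := CStarAlgebra.spectralOrderedRing C
  have hKS : star (φ b) * φ b ≤ φ (star b * b) :=
    sub_nonneg.1 (hφ.isCStarPos_sub_star_mul_self h1 hstar b).nonneg
  have hle : φ (star b * b) ≤ algebraMap ℝ C (‖b‖ ^ 2) := by
    rw [← LinearMap.map_algebraMap_of_map_one h1]
    exact hφ.monotone CStarAlgebra.star_mul_le_algebraMap_norm_sq
  have hsq : ‖φ b‖ ^ 2 ≤ ‖b‖ ^ 2 := by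
    rw [sq, ← CStarRing.norm_star_mul_self]
    exact (CStarAlgebra.norm_le_iff_le_algebraMap _ (by positivity)).2 (hKS.trans hle)
  exact (pow_le_pow_iff_left₀ (norm_nonneg _) (norm_nonneg _) two_ne_zero).1 hsq

end CompletelyPositive

namespace HilbMod

variable {D : Type*} [CStarAlgebra D] {X : Type*} [NormedAddCommGroup X] [NormedSpace ℂ X]
  [CompleteSpace X] (M : HilbMod D X)

theorem inner_rsmul_left (x y : X) (d : D) :
    M.inner (M.rsmul x d) y = star d * M.inner x y := by
  rw [← M.star_inner, M.inner_rsmul_right, star_mul, M.star_inner]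

theorem inner_sum_right {ι : Type*} (s : Finset ι) (f : ι → X) (x : X) :
    M.inner x (∑ i ∈ s, f i) = ∑ i ∈ s, M.inner x (f i) :=
  map_sum (AddMonoidHom.mk' (M.inner x) (M.inner_add_right x)) f s

theorem inner_sum_left {ι : Type*} (s : Finset ι) (f : ι → X) (x : X) :
    M.inner (∑ i ∈ s, f i) x = ∑ i ∈ s, M.inner (f i) x := by
  rw [← M.star_inner, inner_sum_right, star_sum]
  simp only [M.star_inner]

end HilbMod

namespace RepOn

variable {B : Type*} [NonUnitalCStarAlgebra B] {D : Type*} [CStarAlgebra D] {X : Type*}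
  [NormedAddCommGroup X] [NormedSpace ℂ X] [CompleteSpace X] {M : HilbMod D X}
  (π : RepOn B M) (ξ : X)

def vectorMap : B →ₗ[ℂ] D where
  toFun b := M.inner ξ (π.act b ξ)
  map_add' b b' := by rw [map_add, add_apply, M.inner_add_right]
  map_smul' c b := by
    rw [map_smul, smul_apply, M.inner_smul_right, RingHom.id_apply]

theorem vectorMap_apply (b : B) : π.vectorMap ξ b = M.inner ξ (π.act b ξ) := rfl

theorem vectorMap_star_mul (b b' : B) :
    π.vectorMap ξ (star b * b') = M.inner (π.act b ξ) (π.act b' ξ) := by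
  rw [vectorMap_apply, π.act_mul, ContinuousLinearMap.comp_apply, π.act_star]

theorem vectorMap_star (b : B) : π.vectorMap ξ (star b) = star (π.vectorMap ξ b) := by
  rw [vectorMap_apply, vectorMap_apply, M.star_inner, π.act_star]

theorem isCPMap_vectorMap : IsCPMap (π.vectorMap ξ) := by
  intro n b c
  convert M.inner_pos (∑ i, M.rsmul (π.act (b i) ξ) (c i)) using 1
  rw [M.inner_sum_left]
  refine Finset.sum_congr rfl fun i _ => ?_
  rw [M.inner_sum_right]
  refine Finset.sum_congr rfl fun j _ => ?_
  rw [M.inner_rsmul_left, M.inner_rsmul_right, vectorMap_star_mul, mul_assoc]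

end RepOn

namespace GNSRep

variable {D : Type*} {A : Type*} [CStarAlgebra D] [CStarAlgebra A] {ι : D →⋆ₐ[ℂ] A}
  {E : CondExp D A ι} {X : Type*} [NormedAddCommGroup X] [NormedSpace ℂ X] [CompleteSpace X]
  (G : GNSRep ι E X)

theorem inner_cyc_act_cyc (a : A) : G.mod.inner G.cyc (G.rep.act a G.cyc) = E.toMap a := by
  have h := G.inner_cyc 1 a
  rwa [G.rep_unital, ContinuousLinearMap.id_apply, star_one, one_mul] at h

theorem inner_cyc_act_ι (d : D) (x : X) :
    G.mod.inner G.cyc (G.rep.act (ι d) x) = d * G.mod.inner G.cyc x := by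
  rw [← star_star (ι d), ← G.rep.act_star, ← map_star, ← G.cyc_rsmul, G.mod.inner_rsmul_left,
    star_star]

theorem norm_act_cyc_le (a : A) : ‖G.rep.act a G.cyc‖ ≤ ‖a‖ := by
  have hsq : ‖G.rep.act a G.cyc‖ ^ 2 ≤ ‖a‖ ^ 2 := by
    rw [G.mod.norm_inner, G.inner_cyc, sq, ← CStarRing.norm_star_mul_self]
    exact E.contractive _
  exact (pow_le_pow_iff_left₀ (norm_nonneg _) (norm_nonneg _) two_ne_zero).1 hsq

def orbitMap : A →L[ℂ] X :=
  ((ContinuousLinearMap.apply ℂ X G.cyc).toLinearMap ∘ₗ G.rep.act).mkContinuous 1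
    fun a => by simpa using G.norm_act_cyc_le a

theorem orbitMap_apply (a : A) : G.orbitMap a = G.rep.act a G.cyc := rfl

theorem orbitMap_ι (d : D) : G.orbitMap (ι d) = G.mod.rsmul G.cyc d := (G.cyc_rsmul d).symm

theorem jones_orbitMap (a : A) : G.jones (G.orbitMap a) = G.mod.rsmul G.cyc (E.toMap a) := by
  rw [G.jones_apply, orbitMap_apply, inner_cyc_act_cyc]

theorem ext_of_dense_span {s : Set A} (hs : Dense (Submodule.span ℂ s : Set A))
    {T S : X →L[ℂ] X} (h : ∀ a ∈ s, T (G.orbitMap a) = S (G.orbitMap a)) : T = S := by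
  refine ContinuousLinearMap.ext_on (s := G.orbitMap '' s) ?_ (Set.forall_mem_image.2 h)
  have hmap := Submodule.map_span (G.orbitMap : A →ₗ[ℂ] X) s
  rw [ContinuousLinearMap.coe_coe] at hmap
  rw [← hmap, Submodule.map_coe, ContinuousLinearMap.coe_coe]
  exact DenseRange.dense_image G.cyclic G.orbitMap.continuous hs

end GNSRep

namespace CondExp

variable {D A : Type*} [CStarAlgebra D] [CStarAlgebra A] {ι : D →⋆ₐ[ℂ] A} (E : CondExp D A ι)

/-- `a° = a - E(a)`. -/
def centered (a : A) : A := a - ι (E.toMap a)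

theorem toMap_centered (a : A) : E.toMap (E.centered a) = 0 := by
  rw [centered, map_sub, E.retract, sub_self]

theorem centered_add_ι (a : A) : E.centered a + ι (E.toMap a) = a := sub_add_cancel _ _

theorem toMap_ι_mul (d : D) (a : A) : E.toMap (ι d * a) = d * E.toMap a := by
  simpa using E.bimod d a 1

theorem toMap_mul_ι (a : A) (d : D) : E.toMap (a * ι d) = E.toMap a * d := by
  simpa using E.bimod 1 a d

end CondExp

section Words

variable {I : Type*} {A : I → Type*}

/-- The factor a word starts in, with `j` as the value for the empty word: the reduced word `L`
seen as the vector `L η_j` of `Y_j` lies in the range of `P_k` iff `wordStart j L = k`. -/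
def wordStart (j : I) (L : List (Σ i, A i)) : I := (L.map Sigma.fst).headD j

@[simp] theorem wordStart_nil (j : I) : wordStart j ([] : List (Σ i, A i)) = j := rfl

@[simp] theorem wordStart_cons (j : I) (q : Σ i, A i) (L : List (Σ i, A i)) :
    wordStart j (q :: L) = q.1 := rfl

variable {D : Type*} [CStarAlgebra D] [∀ i, CStarAlgebra (A i)] {ι : ∀ i, D →⋆ₐ[ℂ] A i}

def IsReducedWord (Ek : ∀ i, CondExp D (A i) (ι i)) (L : List (Σ i, A i)) : Prop :=
  (∀ p ∈ L, (Ek p.1).toMap p.2 = 0) ∧ (L.map Sigma.fst).IsChain (· ≠ ·)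

namespace IsReducedWord

variable {Ek : ∀ i, CondExp D (A i) (ι i)}

theorem nil : IsReducedWord Ek [] := ⟨by simp, by simp⟩

theorem tail {q : Σ i, A i} {L : List (Σ i, A i)} (h : IsReducedWord Ek (q :: L)) :
    IsReducedWord Ek L :=
  ⟨fun p hp => h.1 p (List.mem_cons_of_mem _ hp), (List.isChain_cons.1 h.2).2⟩

theorem head_ne {q : Σ i, A i} {L : List (Σ i, A i)} (h : IsReducedWord Ek (q :: L)) :
    ∀ r ∈ L.head?, r.1 ≠ q.1 := by
  intro r hr
  have := (List.isChain_cons.1 h.2).1 r.1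
  simp only [List.head?_map, Option.mem_def, Option.map_eq_some_iff] at this
  exact (this ⟨r, hr, rfl⟩).symm

theorem cons {L : List (Σ i, A i)} (h : IsReducedWord Ek L) {i : I} (hL : ∀ r ∈ L.head?, r.1 ≠ i)
    {a : A i} (ha : (Ek i).toMap a = 0) : IsReducedWord Ek (⟨i, a⟩ :: L) := by
  refine ⟨?_, ?_⟩
  · rintro p (_ | ⟨_, hp⟩)
    exacts [ha, h.1 p hp]
  · refine List.isChain_cons.2 ⟨?_, h.2⟩
    intro y hy
    simp only [List.head?_map, Option.mem_def, Option.map_eq_some_iff] at hy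
    obtain ⟨r, hr, rfl⟩ := hy
    exact (hL r hr).symm

theorem cons_of_wordStart_ne {L : List (Σ i, A i)} (h : IsReducedWord Ek L) {i j : I}
    (hL : wordStart j L ≠ i) {a : A i} (ha : (Ek i).toMap a = 0) :
    IsReducedWord Ek (⟨i, a⟩ :: L) :=
  h.cons (by rcases L with _ | ⟨r, L⟩ <;> simp_all) ha

theorem replaceHead {q : Σ i, A i} {L : List (Σ i, A i)} (h : IsReducedWord Ek (q :: L))
    {a : A q.1} (ha : (Ek q.1).toMap a = 0) : IsReducedWord Ek (⟨q.1, a⟩ :: L) :=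
  h.tail.cons h.head_ne ha

end IsReducedWord

end Words

namespace ReducedAFP

variable {I : Type*} {D : Type u} [CStarAlgebra D] {A : I → Type u} [∀ i, CStarAlgebra (A i)]
  {ι : ∀ i, D →⋆ₐ[ℂ] A i} {Ek : ∀ i, CondExp D (A i) (ι i)} {FP : Type u} [CStarAlgebra FP]
  (R : ReducedAFP ι Ek FP)

def wordProd (L : List (Σ i, A i)) : FP := (L.map fun p => R.incl p.1 p.2).prod

@[simp] theorem wordProd_nil : R.wordProd [] = 1 := rfl

@[simp] theorem wordProd_cons (q : Σ i, A i) (L : List (Σ i, A i)) :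
    R.wordProd (q :: L) = R.incl q.1 q.2 * R.wordProd L := by
  simp [wordProd]

theorem incl_mul_inclD (i : I) (a : A i) (d : D) :
    R.incl i a * R.inclD d = R.incl i (a * ι i d) := by
  rw [← R.compat i d, map_mul]

theorem inclD_mul_wordProd_cons (d : D) (q : Σ i, A i) (L : List (Σ i, A i)) :
    R.inclD d * R.wordProd (q :: L) = R.wordProd (⟨q.1, ι q.1 d * q.2⟩ :: L) := by
  rw [wordProd_cons, wordProd_cons, ← mul_assoc, ← R.compat q.1 d, map_mul]

theorem incl_mul_wordProd (i : I) (a : A i) (L : List (Σ i, A i)) :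
    R.incl i a * R.wordProd L =
      R.wordProd (⟨i, (Ek i).centered a⟩ :: L) + R.inclD ((Ek i).toMap a) * R.wordProd L := by
  rw [wordProd_cons, ← add_mul, ← R.compat i, ← map_add, CondExp.centered_add_ι]

theorem exists_ofFn_eq_inclD_mul_wordProd {q : Σ i, A i} {L : List (Σ i, A i)}
    (h : IsReducedWord Ek (q :: L)) (d : D) :
    ∃ (idx : Fin (L.length + 1) → I) (a : ∀ t, A (idx t)),
      (∀ t, (Ek (idx t)).toMap (a t) = 0) ∧ (∀ t : Fin L.length, idx t.castSucc ≠ idx t.succ) ∧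
      idx 0 = q.1 ∧
      (List.ofFn fun t => R.incl (idx t) (a t)).prod = R.inclD d * R.wordProd (q :: L) := by
  have h' := h.replaceHead (a := ι q.1 d * q.2)
    (by rw [CondExp.toMap_ι_mul, h.1 q List.mem_cons_self, mul_zero])
  rw [inclD_mul_wordProd_cons]
  refine ⟨fun t => ((⟨q.1, ι q.1 d * q.2⟩ :: L).get t).1,
    fun t => ((⟨q.1, ι q.1 d * q.2⟩ :: L).get t).2, fun t => ?_, fun t => ?_, rfl, ?_⟩
  · exact h'.1 _ (List.get_mem _ _)
  · have := List.isChain_iff_getElem.1 h'.2 t (by simp)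
    simp only [List.getElem_map] at this
    simpa using this
  · exact congrArg List.prod
      (List.ofFn_getElem_eq_map (⟨q.1, ι q.1 d * q.2⟩ :: L) fun p => R.incl p.1 p.2)

def reducedSet : Set FP := {x | ∃ d L, IsReducedWord Ek L ∧ R.inclD d * R.wordProd L = x}

theorem inclD_mul_wordProd_mem {L : List (Σ i, A i)} (hL : IsReducedWord Ek L) (d : D) :
    R.inclD d * R.wordProd L ∈ Submodule.span ℂ R.reducedSet :=
  Submodule.subset_span ⟨d, L, hL, rfl⟩

theorem wordProd_mem {L : List (Σ i, A i)} (hL : IsReducedWord Ek L) :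
    R.wordProd L ∈ Submodule.span ℂ R.reducedSet := by
  simpa using R.inclD_mul_wordProd_mem hL 1

theorem incl_mul_wordProd_mem_of_head_ne {L : List (Σ i, A i)} (hL : IsReducedWord Ek L)
    {i : I} (hi : ∀ r ∈ L.head?, r.1 ≠ i) (a : A i) :
    R.incl i a * R.wordProd L ∈ Submodule.span ℂ R.reducedSet := by
  rw [incl_mul_wordProd]
  exact add_mem (R.wordProd_mem (hL.cons hi ((Ek i).toMap_centered a)))
    (R.inclD_mul_wordProd_mem hL _)

theorem incl_mul_wordProd_mem {L : List (Σ i, A i)} (hL : IsReducedWord Ek L) (i : I) (a : A i) :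
    R.incl i a * R.wordProd L ∈ Submodule.span ℂ R.reducedSet := by
  rcases L with _ | ⟨⟨j, b⟩, L⟩
  · exact R.incl_mul_wordProd_mem_of_head_ne hL (by simp) a
  by_cases hij : j = i
  · subst hij
    rw [wordProd_cons, ← mul_assoc, ← map_mul]
    exact R.incl_mul_wordProd_mem_of_head_ne hL.tail hL.head_ne _
  · exact R.incl_mul_wordProd_mem_of_head_ne hL (by simpa using hij) a

theorem incl_mul_mem {x : FP} (hx : x ∈ Submodule.span ℂ R.reducedSet) (i : I) (a : A i) :
    R.incl i a * x ∈ Submodule.span ℂ R.reducedSet := by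
  have hle : Submodule.span ℂ R.reducedSet ≤
      (Submodule.span ℂ R.reducedSet).comap (LinearMap.mulLeft ℂ (R.incl i a)) := by
    rw [Submodule.span_le]
    rintro _ ⟨d, L, hL, rfl⟩
    change R.incl i a * (R.inclD d * R.wordProd L) ∈ Submodule.span ℂ R.reducedSet
    rw [← mul_assoc, incl_mul_inclD]
    exact R.incl_mul_wordProd_mem hL i _
  exact hle hx

theorem dense_span_reducedSet : Dense (Submodule.span ℂ R.reducedSet : Set FP) := by
  set S := ⋃ i, Set.range (R.incl i)
  have hS : ∀ x ∈ S ∪ star S, ∃ i a, R.incl i a = x := by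
    rintro x (hx | hx)
    · simpa [S] using hx
    · obtain ⟨i, a, ha⟩ := Set.mem_iUnion.1 (Set.mem_star.1 hx)
      exact ⟨i, star a, by rw [map_star, ha, star_star]⟩
  have hclosure : (Submonoid.closure (S ∪ star S) : Set FP) ⊆ Submodule.span ℂ R.reducedSet := by
    intro x hx
    induction hx using Submonoid.closure_induction_left with
    | one => exact R.wordProd_mem IsReducedWord.nil
    | mul_left x hx y _ hy =>
      obtain ⟨i, a, rfl⟩ := hS x hx
      exact R.incl_mul_mem hy i a
  refine R.generates.mono fun x hx => ?_
  have hx' : x ∈ Subalgebra.toSubmodule (Algebra.adjoin ℂ (S ∪ star S)) := hx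
  rw [Algebra.adjoin_eq_span] at hx'
  exact Submodule.span_le.2 hclosure hx'

theorem ext_orbitMap {B : Type*} [CStarAlgebra B] {κ : B →⋆ₐ[ℂ] FP} {E : CondExp B FP κ}
    {X : Type*} [NormedAddCommGroup X] [NormedSpace ℂ X] [CompleteSpace X] (G : GNSRep κ E X)
    {T S : X →L[ℂ] X}
    (h : ∀ d L, IsReducedWord Ek L → T (G.orbitMap (R.inclD d * R.wordProd L)) =
      S (G.orbitMap (R.inclD d * R.wordProd L))) : T = S :=
  G.ext_of_dense_span R.dense_span_reducedSet (by rintro _ ⟨d, L, hL, rfl⟩; exact h d L hL)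

end ReducedAFP

namespace FactorExp

variable {I : Type*} {D : Type u} [CStarAlgebra D] {A : I → Type u} [∀ i, CStarAlgebra (A i)]
  {ι : ∀ i, D →⋆ₐ[ℂ] A i} {Ek : ∀ i, CondExp D (A i) (ι i)} {FP : Type u} [CStarAlgebra FP]
  {R : ReducedAFP ι Ek FP} {k : I} (F : FactorExp R k) {X : Type*} [NormedAddCommGroup X]
  [NormedSpace ℂ X] [CompleteSpace X] (G : GNSRep (R.incl k) F.toCondExp X)

theorem jones_orbitMap_eq_zero {L : List (Σ i, A i)} (hL : IsReducedWord Ek L)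
    (hlen : 2 ≤ L.length ∨ wordStart k L ≠ k) (d : D) :
    G.jones (G.orbitMap (R.inclD d * R.wordProd L)) = 0 := by
  rcases L with _ | ⟨q, L⟩
  · simp at hlen
  obtain ⟨idx, a, hE, hch, h0, hprod⟩ := R.exists_ofFn_eq_inclD_mul_wordProd hL d
  have hkill := F.kills L.length idx a hE hch
    (hlen.imp (by simp) (by simpa [h0] using ·))
  rw [GNSRep.jones_orbitMap, ← hprod, hkill, map_zero]

theorem jones_centered_cons {L : List (Σ i, A i)} (hL : IsReducedWord Ek L)
    (hk : wordStart k L ≠ k) (a : A k) :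
    G.jones (G.orbitMap (R.wordProd (⟨k, (Ek k).centered a⟩ :: L))) = 0 := by
  have hlen : 2 ≤ (⟨k, (Ek k).centered a⟩ :: L).length := by
    rcases L with _ | ⟨q, L⟩
    · exact absurd rfl hk
    · simp
  simpa using F.jones_orbitMap_eq_zero G (hL.cons_of_wordStart_ne hk ((Ek k).toMap_centered a))
    (Or.inl hlen) 1

end FactorExp

namespace ConcreteDeltaT

variable {I : Type*} {D : Type u} [CStarAlgebra D] {A : I → Type u} [∀ i, CStarAlgebra (A i)]
  {ι : ∀ i, D →⋆ₐ[ℂ] A i} {Ek : ∀ i, CondExp D (A i) (ι i)} {FP : Type u} [CStarAlgebra FP]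
  {R : ReducedAFP ι Ek FP} {Fexp : ∀ k, FactorExp R k} {Y : I → Type v}
  [∀ k, NormedAddCommGroup (Y k)] [∀ k, NormedSpace ℂ (Y k)] [∀ k, CompleteSpace (Y k)]
  {Gns : ∀ k, GNSRep (R.incl k) (Fexp k).toCondExp (Y k)} {Δ : Type u} [CStarAlgebra Δ]
  (CD : ConcreteDeltaT R Fexp Y Gns Δ)

theorem ext {x y : Δ} (h : ∀ j, (CD.σrep j).act x = (CD.σrep j).act y) : x = y := by
  rw [← sub_eq_zero]
  exact CD.faithful_family _ fun j => by rw [map_sub, h, sub_self]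

theorem act_one_sub (j : I) (δ : Δ) (v : Y j) :
    (CD.σrep j).act (1 - δ) v = v - (CD.σrep j).act δ v := by
  rw [map_sub, sub_apply, CD.σrep_unital j, ContinuousLinearMap.id_apply]

theorem act_emb_orbitMap (j : I) (x y : FP) :
    (CD.σrep j).act (CD.emb x) ((Gns j).orbitMap y) = (Gns j).orbitMap (x * y) := by
  rw [CD.σ_emb, GNSRep.orbitMap_apply, GNSRep.orbitMap_apply, (Gns j).rep.act_mul,
    ContinuousLinearMap.comp_apply]

theorem act_emb_inclD_orbitMap (j : I) (d d' : D) (L : List (Σ i, A i)) :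
    (CD.σrep j).act (CD.emb (R.inclD d')) ((Gns j).orbitMap (R.inclD d * R.wordProd L)) =
      (Gns j).orbitMap (R.inclD (d' * d) * R.wordProd L) := by
  rw [act_emb_orbitMap, ← mul_assoc, ← map_mul]

theorem act_emb_incl_orbitMap (j k : I) (a : A k) (d : D) (L : List (Σ i, A i)) :
    (CD.σrep j).act (CD.emb (R.incl k a)) ((Gns j).orbitMap (R.inclD d * R.wordProd L)) =
      (Gns j).orbitMap (R.wordProd (⟨k, (Ek k).centered (a * ι k d)⟩ :: L)) +
        (Gns j).orbitMap (R.inclD ((Ek k).toMap a * d) * R.wordProd L) := by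
  rw [act_emb_orbitMap, ← mul_assoc, R.incl_mul_inclD, R.incl_mul_wordProd,
    CondExp.toMap_mul_ι, map_add]

theorem act_P_of_wordStart_eq {j k : I} {L : List (Σ i, A i)} (hL : IsReducedWord Ek L)
    (hk : wordStart j L = k) (d : D) :
    (CD.σrep j).act (CD.P k) ((Gns j).orbitMap (R.inclD d * R.wordProd L)) =
      (Gns j).orbitMap (R.inclD d * R.wordProd L) := by
  rcases L with _ | ⟨q, L⟩
  · obtain rfl : j = k := hk
    rw [R.wordProd_nil, mul_one, ← R.compat j d, GNSRep.orbitMap_ι, (CD.σrep j).act_rsmul,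
      CD.P_cyc_self]
  · obtain ⟨idx, a, hE, hch, h0, hprod⟩ := R.exists_ofFn_eq_inclD_mul_wordProd hL d
    rw [← hprod]
    exact CD.P_word_fix j k L.length idx a hE hch (h0.trans hk)

theorem act_P_of_wordStart_ne {j k : I} {L : List (Σ i, A i)} (hL : IsReducedWord Ek L)
    (hk : wordStart j L ≠ k) (d : D) :
    (CD.σrep j).act (CD.P k) ((Gns j).orbitMap (R.inclD d * R.wordProd L)) = 0 := by
  rcases L with _ | ⟨q, L⟩
  · rw [R.wordProd_nil, mul_one, ← R.compat j d, GNSRep.orbitMap_ι, (CD.σrep j).act_rsmul,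
      CD.P_cyc_ne j k hk, map_zero, LinearMap.zero_apply]
  · obtain ⟨idx, a, hE, hch, h0, hprod⟩ := R.exists_ofFn_eq_inclD_mul_wordProd hL d
    rw [← hprod]
    exact CD.P_word_kill j k L.length idx a hE hch (h0.trans_ne hk)

theorem ext_comp_one_sub_P {j k : I} {T S : Y j →L[ℂ] Y j}
    (h : ∀ d L, IsReducedWord Ek L → wordStart j L ≠ k →
      T ((Gns j).orbitMap (R.inclD d * R.wordProd L)) =
        S ((Gns j).orbitMap (R.inclD d * R.wordProd L))) :
    T.comp ((CD.σrep j).act (1 - CD.P k)) = S.comp ((CD.σrep j).act (1 - CD.P k)) := by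
  refine R.ext_orbitMap (Gns j) fun d L hL => ?_
  simp only [ContinuousLinearMap.comp_apply, act_one_sub]
  by_cases hk : wordStart j L = k
  · rw [CD.act_P_of_wordStart_eq hL hk, sub_self, map_zero, map_zero]
  · rw [CD.act_P_of_wordStart_ne hL hk, sub_zero, h d L hL hk]

theorem act_P_centered_cons {j k : I} {L : List (Σ i, A i)} (hL : IsReducedWord Ek L)
    (hk : wordStart j L ≠ k) (a : A k) :
    (CD.σrep j).act (CD.P k) ((Gns j).orbitMap (R.wordProd (⟨k, (Ek k).centered a⟩ :: L))) =
      (Gns j).orbitMap (R.wordProd (⟨k, (Ek k).centered a⟩ :: L)) := by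
  simpa using CD.act_P_of_wordStart_eq
    (hL.cons_of_wordStart_ne hk ((Ek k).toMap_centered a)) (wordStart_cons j _ L) 1

theorem commute_P_emb_inclD (k : I) (d : D) : Commute (CD.P k) (CD.emb (R.inclD d)) := by
  refine CD.ext fun j => ?_
  rw [(CD.σrep j).act_mul, (CD.σrep j).act_mul]
  refine R.ext_orbitMap (Gns j) fun d' L hL => ?_
  simp only [ContinuousLinearMap.comp_apply, act_emb_inclD_orbitMap]
  by_cases hk : wordStart j L = k
  · rw [CD.act_P_of_wordStart_eq hL hk, CD.act_P_of_wordStart_eq hL hk, act_emb_inclD_orbitMap]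
  · rw [CD.act_P_of_wordStart_ne hL hk, CD.act_P_of_wordStart_ne hL hk, map_zero]

/-- On a word `v` not starting in `A_k`, `a v = a° v + E(a) v`, where `a° v` starts in `A_k` and
`E(a) v` does not. -/
theorem centered_mul_one_sub_P (k : I) (a : A k) :
    CD.emb (R.incl k a - R.inclD ((Ek k).toMap a)) * (1 - CD.P k) =
      CD.P k * CD.emb (R.incl k a) * (1 - CD.P k) := by
  refine CD.ext fun j => ?_
  simp only [(CD.σrep j).act_mul]
  refine CD.ext_comp_one_sub_P fun d L hL hk => ?_
  rw [ContinuousLinearMap.comp_apply, map_sub, map_sub, sub_apply, act_emb_incl_orbitMap,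
    act_emb_inclD_orbitMap, add_sub_cancel_right, map_add,
    CD.act_P_centered_cons hL hk, CD.act_P_of_wordStart_ne hL hk, add_zero]

theorem jones_comp_act_incl_comp_one_sub_P (k : I) (a : A k) :
    (Gns k).jones.comp (((CD.σrep k).act (CD.emb (R.incl k a))).comp
      ((CD.σrep k).act (1 - CD.P k))) = 0 := by
  rw [← ContinuousLinearMap.comp_assoc, ← ContinuousLinearMap.zero_comp
    ((CD.σrep k).act (1 - CD.P k))]
  refine CD.ext_comp_one_sub_P fun d L hL hk => ?_
  rw [ContinuousLinearMap.comp_apply, act_emb_incl_orbitMap, map_add,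
    (Fexp k).jones_centered_cons (Gns k) hL hk,
    (Fexp k).jones_orbitMap_eq_zero (Gns k) hL (Or.inr hk), add_zero, zero_apply]

theorem one_sub_P_mul_incl_mul_one_sub_P (k : I) (a : A k) :
    (1 - CD.P k) * CD.emb (R.incl k a) * (1 - CD.P k) =
      CD.emb (R.inclD ((Ek k).toMap a)) * (1 - CD.P k) := by
  have h := CD.centered_mul_one_sub_P k a
  rw [map_sub, sub_mul] at h
  rw [sub_mul, one_mul, sub_mul, ← h, sub_sub_cancel]

theorem vectorMap_emb (k : I) (y : FP) :
    (CD.σrep k).vectorMap (Gns k).cyc (CD.emb y) = (Fexp k).toCondExp.toMap y := by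
  rw [RepOn.vectorMap_apply, CD.σ_emb, GNSRep.inner_cyc_act_cyc]

/-- The compression `δ ↦ e_{A_k} δ e_{A_k}`, read in `L(η_k A_k) ≅ A_k`. -/
def compression (k : I) : CondExp (A k) Δ (CD.emb.comp (R.incl k)) where
  toMap := (CD.σrep k).vectorMap (Gns k).cyc
  map_star := (CD.σrep k).vectorMap_star _
  retract a := by
    rw [StarAlgHom.comp_apply, vectorMap_emb, CondExp.retract]
  bimod b δ b' := by
    rw [RepOn.vectorMap_apply, RepOn.vectorMap_apply, (CD.σrep k).act_mul, (CD.σrep k).act_mul,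
      ContinuousLinearMap.comp_apply, ContinuousLinearMap.comp_apply, StarAlgHom.comp_apply,
      StarAlgHom.comp_apply, CD.σ_emb, CD.σ_emb, ← (Gns k).cyc_rsmul, (CD.σrep k).act_rsmul,
      (Gns k).rep.act_rsmul, (Gns k).mod.inner_rsmul_right, GNSRep.inner_cyc_act_ι, mul_assoc]
  cp := (CD.σrep k).isCPMap_vectorMap _
  contractive := ((CD.σrep k).isCPMap_vectorMap _).norm_map_le
    (by rw [← map_one CD.emb, vectorMap_emb, ← map_one (R.incl k), CondExp.retract])
    ((CD.σrep k).vectorMap_star _)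

theorem compression_emb (k : I) (y : FP) :
    (CD.compression k).toMap (CD.emb y) = (Fexp k).toCondExp.toMap y :=
  CD.vectorMap_emb k y

theorem jones_comp_act_comp_jones (k : I) (δ : Δ) :
    (Gns k).jones.comp (((CD.σrep k).act δ).comp (Gns k).jones) =
      ((Gns k).rep.act (R.incl k ((CD.compression k).toMap δ))).comp (Gns k).jones := by
  ext v
  simp only [ContinuousLinearMap.comp_apply]
  rw [(Gns k).jones_apply v, (CD.σrep k).act_rsmul, (Gns k).jones_apply,
    (Gns k).mod.inner_rsmul_right, (Gns k).rep.act_rsmul, ← (Gns k).cyc_rsmul,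
    (Gns k).mod.rsmul_assoc]
  rfl

end ConcreteDeltaT

theorem stmt_2_general {I : Type w} {D : Type u} [CStarAlgebra D] {A : I → Type u}
    [∀ i, CStarAlgebra (A i)] (ι : ∀ i, D →⋆ₐ[ℂ] A i)
    (Ek : ∀ i, CondExp D (A i) (ι i))
    (FP : Type u) [CStarAlgebra FP]
    (R : ReducedAFP ι Ek FP) (Fexp : ∀ k, FactorExp R k) (Y : I → Type v)
    [∀ k, NormedAddCommGroup (Y k)] [∀ k, NormedSpace ℂ (Y k)]
    [∀ k, CompleteSpace (Y k)] (Gns : ∀ k, GNSRep (R.incl k) (Fexp k).toCondExp (Y k))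
    (Δ : Type u) [CStarAlgebra Δ] (CD : ConcreteDeltaT R Fexp Y Gns Δ) :
    -- (i) the projections `P_k` commute with `D`
    (∀ k (d : D), CD.P k * CD.emb (R.inclD d) = CD.emb (R.inclD d) * CD.P k) ∧
    -- (ii) `P_k^⊥ a P_k^⊥ = E(a) P_k^⊥` …
    (∀ k (a : A k),
      (1 - CD.P k) * CD.emb (R.incl k a) * (1 - CD.P k) =
        CD.emb (R.inclD ((Ek k).toMap a)) * (1 - CD.P k)) ∧
    -- … and `a° P_k^⊥ = P_k° a P_k^⊥` with `P_k° = P_k - e_{A_k}` (an identity in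
    -- `L(Y)`, stated componentwise; the Jones projection `e_{A_k}` is supported on
    -- the component `Y_k`)
    (∀ k (a : A k),
      (CD.σrep k).act (CD.emb (R.incl k a - R.inclD ((Ek k).toMap a)) * (1 - CD.P k)) =
        (((CD.σrep k).act (CD.P k) - (Gns k).jones).comp
          (((CD.σrep k).act (CD.emb (R.incl k a))).comp
            ((CD.σrep k).act (1 - CD.P k))))) ∧
    (∀ j k, j ≠ k → ∀ a : A k,
      (CD.σrep j).act (CD.emb (R.incl k a - R.inclD ((Ek k).toMap a)) * (1 - CD.P k)) =
        (CD.σrep j).act (CD.P k * CD.emb (R.incl k a) * (1 - CD.P k))) ∧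
    -- (iii) compression by `e_{A_k}` defines a conditional expectation
    -- `ΔT(A,E) → A_k` extending `E_{A_k}`
    (∀ k, ∃ EΔ : CondExp (A k) Δ ((CD.emb).comp (R.incl k)),
      (∀ y : FP, EΔ.toMap (CD.emb y) = (Fexp k).toCondExp.toMap y) ∧
      ∀ δ : Δ, (Gns k).jones.comp (((CD.σrep k).act δ).comp (Gns k).jones) =
        ((Gns k).rep.act (R.incl k (EΔ.toMap δ))).comp (Gns k).jones) := by
  refine ⟨CD.commute_P_emb_inclD, CD.one_sub_P_mul_incl_mul_one_sub_P, fun k a => ?_,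
    fun j k _ a => by rw [CD.centered_mul_one_sub_P],
    fun k => ⟨CD.compression k, CD.compression_emb k, CD.jones_comp_act_comp_jones k⟩⟩
  rw [CD.centered_mul_one_sub_P, ContinuousLinearMap.sub_comp,
    CD.jones_comp_act_incl_comp_one_sub_P, sub_zero, (CD.σrep k).act_mul, (CD.σrep k).act_mul,
    ContinuousLinearMap.comp_assoc]

theorem stmt_2 {I : Type w} {D : Type u} [CStarAlgebra D] {A : I → Type u}
    [∀ i, CStarAlgebra (A i)] (ι : ∀ i, D →⋆ₐ[ℂ] A i)
    (hι : ∀ i, Function.Injective (ι i)) (Ek : ∀ i, CondExp D (A i) (ι i))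
    (hEk : ∀ i, (Ek i).Nondeg) (FP : Type u) [CStarAlgebra FP]
    (R : ReducedAFP ι Ek FP) (Fexp : ∀ k, FactorExp R k) (Y : I → Type v)
    [∀ k, NormedAddCommGroup (Y k)] [∀ k, NormedSpace ℂ (Y k)]
    [∀ k, CompleteSpace (Y k)] (Gns : ∀ k, GNSRep (R.incl k) (Fexp k).toCondExp (Y k))
    (Δ : Type u) [CStarAlgebra Δ] (CD : ConcreteDeltaT R Fexp Y Gns Δ) :
    -- (i) the projections `P_k` commute with `D`
    (∀ k (d : D), CD.P k * CD.emb (R.inclD d) = CD.emb (R.inclD d) * CD.P k) ∧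
    -- (ii) `P_k^⊥ a P_k^⊥ = E(a) P_k^⊥` …
    (∀ k (a : A k),
      (1 - CD.P k) * CD.emb (R.incl k a) * (1 - CD.P k) =
        CD.emb (R.inclD ((Ek k).toMap a)) * (1 - CD.P k)) ∧
    -- … and `a° P_k^⊥ = P_k° a P_k^⊥` with `P_k° = P_k - e_{A_k}` (an identity in
    -- `L(Y)`, stated componentwise; the Jones projection `e_{A_k}` is supported on
    -- the component `Y_k`)
    (∀ k (a : A k),
      (CD.σrep k).act (CD.emb (R.incl k a - R.inclD ((Ek k).toMap a)) * (1 - CD.P k)) =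
        (((CD.σrep k).act (CD.P k) - (Gns k).jones).comp
          (((CD.σrep k).act (CD.emb (R.incl k a))).comp
            ((CD.σrep k).act (1 - CD.P k))))) ∧
    (∀ j k, j ≠ k → ∀ a : A k,
      (CD.σrep j).act (CD.emb (R.incl k a - R.inclD ((Ek k).toMap a)) * (1 - CD.P k)) =
        (CD.σrep j).act (CD.P k * CD.emb (R.incl k a) * (1 - CD.P k))) ∧
    -- (iii) compression by `e_{A_k}` defines a conditional expectation
    -- `ΔT(A,E) → A_k` extending `E_{A_k}`
    (∀ k, ∃ EΔ : CondExp (A k) Δ ((CD.emb).comp (R.incl k)),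
      (∀ y : FP, EΔ.toMap (CD.emb y) = (Fexp k).toCondExp.toMap y) ∧
      ∀ δ : Δ, (Gns k).jones.comp (((CD.σrep k).act δ).comp (Gns k).jones) =
        ((Gns k).rep.act (R.incl k (EΔ.toMap δ))).comp (Gns k).jones) :=
  stmt_2_general ι Ek FP R Fexp Y Gns Δ CD

end
end

section
/- Let D ⊂ A be a unital inclusion of C*-algebras with conditional expectation E : A → D, and let 𝓑 be the universal unital C*-algebra generated by a unital copy of A and a projection e such that e a e = E(a) e for all a ∈ A. A unital *-homomorphism ρ from 𝓑 into a unital C*-algebra is injective provided the restrictions ρ|_A and ρ|_{De} are injective and ρ(A) ∩ closed-span ρ(AeA) = {0}. -/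
/-! ### The universal Jones extension `𝓑 = C*(A, e)` of a conditional expectation -/

noncomputable section

universe u v

/-- The universal unital C*-algebra `𝓑` generated by a unital copy of `A` and a
projection `e` subject to the relations `e a e = E(a) e` (`a ∈ A`). -/
structure JonesExtension {D : Type u} {A : Type u} [CStarAlgebra D] [CStarAlgebra A]
    (ι : D →⋆ₐ[ℂ] A) (E : CondExp D A ι) (𝓑 : Type u) [CStarAlgebra 𝓑] :
    Type (u + 1) where
  inclA : A →⋆ₐ[ℂ] 𝓑
  e : 𝓑
  e_sa : star e = e
  e_idem : e * e = e
  rel : ∀ a : A, e * inclA a * e = inclA (ι (E.toMap a)) * e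
  generates : GeneratesCStar (Set.range inclA ∪ {e})
  universal : ∀ (C : Type u) [CStarAlgebra C] (π : A →⋆ₐ[ℂ] C) (p : C),
    star p = p → p * p = p → (∀ a, p * π a * p = π (ι (E.toMap a)) * p) →
    ∃! ρ : 𝓑 →⋆ₐ[ℂ] C, ρ.comp inclA = π ∧ ρ e = p

end


/-! ### Statement 3

A unital *-homomorphism `ρ` from the universal Jones extension `𝓑` of `(D ⊆ A, E)` into
a unital C*-algebra is injective provided its restrictions to (the copies of) `A` and
`De` are injective and `ρ(A) ∩ closed-span ρ(A e A) = {0}`. -/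

noncomputable section

universe u

/-! Universality with `p = 0` gives a retraction `σ : 𝓑 → A` with `σ(e) = 0`, and every
`x ∈ 𝓑` splits as `σ(x) + y` with `y` in the closed ideal `I = closed-span(AeA)`. If `ρ x = 0`,
then `ρ(σ x) = -ρ y` lies in the closed span of `ρ(AeA)`, so it vanishes and `σ x = 0` by
injectivity on `A`; thus `x ∈ I`. Finally `ρ` is faithful on `I`: the compression `e I e` lies
in the closure of `De`, where `ρ` is isometric since it is injective on `De`. -/

open scoped CStarAlgebra

namespace NonUnitalStarAlgHom

variable {D B₁ B₂ : Type*} [NonUnitalCStarAlgebra D] [NonUnitalCStarAlgebra B₁]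
  [NonUnitalCStarAlgebra B₂] (π₁ : D →⋆ₙₐ[ℂ] B₁) (π₂ : D →⋆ₙₐ[ℂ] B₂)

/- Clamp the spectrum to `[-r, r]` with `r = ‖π₂ a‖`: the part cut off lies in
`ker π₂ ⊆ ker π₁`, so `π₁ a` equals its clamped version, of norm at most `r`. -/
lemma norm_map_le_of_ker_le_of_isSelfAdjoint (hker : ∀ d, π₂ d = 0 → π₁ d = 0) {a : D}
    (ha : IsSelfAdjoint a) : ‖π₁ a‖ ≤ ‖π₂ a‖ := by
  set r := ‖π₂ a‖
  set g : ℝ → ℝ := fun t => max (-r) (min r t)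
  have hr : 0 ≤ r := norm_nonneg _
  have hg0 : g 0 = 0 := by simp [g, hr]
  have hcut₂ : π₂ (cfcₙ (fun t => t - g t) a) = 0 := by
    rw [map_cfcₙ π₂ _ a (hf₀ := by simp [hg0])]
    refine (cfcₙ_congr fun t ht => ?_).trans (cfcₙ_zero ℝ _)
    have ht : |t| ≤ r := by
      simpa [cfcₙ_id' ℝ (π₂ a)] using norm_apply_le_norm_cfcₙ (fun t : ℝ => t) (π₂ a) ht
    simp only [g, min_eq_right (abs_le.mp ht).2, max_eq_right (abs_le.mp ht).1, sub_self,
      Pi.zero_apply]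
  have hcut₁ : cfcₙ (fun t => t - g t) (π₁ a) = 0 := by
    rw [← map_cfcₙ π₁ _ a (hf₀ := by simp [hg0])]
    exact hker _ hcut₂
  have hclamp : cfcₙ g (π₁ a) = π₁ a := by
    simpa [hcut₁, cfcₙ_id' ℝ (π₁ a)] using cfcₙ_sub (fun t => t) (fun t => t - g t) (π₁ a)
  rw [← hclamp]
  exact norm_cfcₙ_le fun t _ => abs_le.mpr ⟨le_max_left _ _, max_le (by linarith) (min_le_left _ _)⟩

lemma norm_map_le_of_ker_le (hker : ∀ d, π₂ d = 0 → π₁ d = 0) (d : D) : ‖π₁ d‖ ≤ ‖π₂ d‖ := by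
  have h := norm_map_le_of_ker_le_of_isSelfAdjoint π₁ π₂ hker (.star_mul_self d)
  rw [map_mul, map_mul, map_star, map_star, CStarRing.norm_star_mul_self,
    CStarRing.norm_star_mul_self] at h
  exact (mul_self_le_mul_self_iff (norm_nonneg _) (norm_nonneg _)).mpr h

lemma eq_zero_of_mem_closure_range {D B C : Type*} [NonUnitalCStarAlgebra D]
    [NonUnitalCStarAlgebra B] [NonUnitalCStarAlgebra C] (φ : D →⋆ₙₐ[ℂ] B) (ρ : B →⋆ₙₐ[ℂ] C)
    (hker : ∀ d, ρ (φ d) = 0 → φ d = 0) {u : B} (hu : u ∈ closure (Set.range φ))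
    (hρu : ρ u = 0) : u = 0 := by
  have hle : ‖u‖ ≤ ‖ρ u‖ :=
    closure_minimal (by rintro _ ⟨d, rfl⟩; exact norm_map_le_of_ker_le φ (ρ.comp φ) hker d)
      (isClosed_le continuous_norm (map_continuous ρ).norm) hu
  simpa [hρu] using hle

end NonUnitalStarAlgHom

lemma GeneratesCStar.induction {B : Type*} [CStarAlgebra B] {S : Set B}
    (hS : GeneratesCStar S) {p : B → Prop} (closed : IsClosed {x | p x}) (mem : ∀ x ∈ S, p x)
    (algebraMap : ∀ r : ℂ, p (algebraMap ℂ B r)) (add : ∀ x y, p x → p y → p (x + y))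
    (mul : ∀ x y, p x → p y → p (x * y)) (star : ∀ x, p x → p (star x)) (x : B) : p x :=
  closure_minimal (fun _ hy => StarAlgebra.adjoin_induction (p := fun y _ => p y) mem algebraMap
    (fun x y _ _ => add x y) (fun x y _ _ => mul x y) (fun x _ => star x) hy) closed (hS x)

def StarAlgHom.cutDown {R D B : Type*} [CommSemiring R] [Semiring D] [Algebra R D] [Star D]
    [Semiring B] [Algebra R B] [StarMul B] (π : D →⋆ₐ[R] B) {p : B} (hp : IsStarProjection p)
    (hcomm : ∀ d, Commute p (π d)) : D →⋆ₙₐ[R] B where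
  toFun d := π d * p
  map_smul' r d := by rw [map_smul, smul_mul_assoc]; rfl
  map_zero' := by rw [map_zero, zero_mul]
  map_add' d d' := by rw [map_add, add_mul]
  map_mul' d d' := by
    simp only [map_mul]
    rw [mul_assoc, mul_assoc, ← (hcomm d').eq, ← mul_assoc p, hp.isIdempotentElem.eq]
  map_star' d := by
    rw [star_mul, hp.isSelfAdjoint.star_eq, ← (hcomm (star d)).eq, map_star]

namespace JonesExtension

variable {D A : Type u} [CStarAlgebra D] [CStarAlgebra A] {ι : D →⋆ₐ[ℂ] A} {E : CondExp D A ι}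
  {𝓑 : Type u} [CStarAlgebra 𝓑] (J : JonesExtension ι E 𝓑)

lemma isStarProjection_e : IsStarProjection J.e := ⟨J.e_idem, J.e_sa⟩

lemma e_mul_inclA_ι_mul_e (d : D) : J.e * J.inclA (ι d) * J.e = J.inclA (ι d) * J.e := by
  simpa [E.retract] using J.rel (ι d)

lemma commute_e_inclA_ι (d : D) : Commute J.e (J.inclA (ι d)) := by
  have h := congrArg star (J.e_mul_inclA_ι_mul_e (star d))
  simp only [star_mul, map_star, star_star, J.e_sa, ← mul_assoc] at h
  exact h.symm.trans (J.e_mul_inclA_ι_mul_e d)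

def deMap : D →⋆ₙₐ[ℂ] 𝓑 := (J.inclA.comp ι).cutDown J.isStarProjection_e J.commute_e_inclA_ι

lemma deMap_apply (d : D) : J.deMap d = J.inclA (ι d) * J.e := rfl

def spanAeA : Submodule ℂ 𝓑 :=
  Submodule.span ℂ {x | ∃ b c : A, x = J.inclA b * J.e * J.inclA c}

/-- The closed two-sided ideal of `𝓑` generated by `e`. -/
def ideal : Submodule ℂ 𝓑 := J.spanAeA.topologicalClosure

lemma isClosed_ideal : IsClosed (J.ideal : Set 𝓑) := J.spanAeA.isClosed_topologicalClosure

lemma star_mem_spanAeA {v : 𝓑} (hv : v ∈ J.spanAeA) : star v ∈ J.spanAeA := by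
  induction hv using Submodule.span_induction with
  | mem x hx =>
    obtain ⟨b, c, rfl⟩ := hx
    exact Submodule.subset_span ⟨star c, star b, by simp [star_mul, J.e_sa, mul_assoc, map_star]⟩
  | zero => simp
  | add x y _ _ hx hy => simpa using add_mem hx hy
  | smul r x _ hx => simpa using Submodule.smul_mem _ (star r) hx

lemma inclA_mul_mem_spanAeA (a : A) {v : 𝓑} (hv : v ∈ J.spanAeA) :
    J.inclA a * v ∈ J.spanAeA := by
  refine Submodule.span_le (p := J.spanAeA.comap (LinearMap.mulLeft ℂ (J.inclA a))) |>.mpr ?_ hv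
  rintro _ ⟨b, c, rfl⟩
  exact Submodule.subset_span ⟨a * b, c, by simp [mul_assoc]⟩

lemma e_mul_mem_spanAeA {v : 𝓑} (hv : v ∈ J.spanAeA) : J.e * v ∈ J.spanAeA := by
  refine Submodule.span_le (p := J.spanAeA.comap (LinearMap.mulLeft ℂ J.e)) |>.mpr ?_ hv
  rintro _ ⟨b, c, rfl⟩
  refine Submodule.subset_span ⟨ι (E.toMap b), c, ?_⟩
  change J.e * (J.inclA b * J.e * J.inclA c) = _
  rw [← J.rel b]
  simp only [mul_assoc]

lemma star_mem_ideal {y : 𝓑} (hy : y ∈ J.ideal) : star y ∈ J.ideal :=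
  map_mem_closure continuous_star hy fun _ => J.star_mem_spanAeA

lemma mul_mem_ideal_and_mem_ideal_mul (z : 𝓑) :
    ∀ y ∈ J.ideal, z * y ∈ J.ideal ∧ y * z ∈ J.ideal := by
  have of_generator {z : 𝓑} (hz : ∀ v ∈ J.spanAeA, z * v ∈ J.spanAeA)
      (hz' : ∀ v ∈ J.spanAeA, star z * v ∈ J.spanAeA) (y : 𝓑) (hy : y ∈ J.ideal) :
      z * y ∈ J.ideal ∧ y * z ∈ J.ideal := by
    refine ⟨map_mem_closure (continuous_const_mul z) hy hz, ?_⟩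
    simpa using J.star_mem_ideal (map_mem_closure (continuous_const_mul (star z))
      (J.star_mem_ideal hy) hz')
  refine J.generates.induction (p := fun z => ∀ y ∈ J.ideal, z * y ∈ J.ideal ∧ y * z ∈ J.ideal)
    ?closed ?mem ?algebraMap ?add ?mul ?star z
  case closed =>
    simp only [Set.ofPred_forall]
    exact isClosed_biInter fun y _ =>
      (J.isClosed_ideal.preimage (continuous_mul_const y)).inter
        (J.isClosed_ideal.preimage (continuous_const_mul y))
  case mem =>
    rintro _ (⟨a, rfl⟩ | rfl)
    · exact of_generator (fun _ => J.inclA_mul_mem_spanAeA a)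
        (by simpa [← map_star] using fun _ => J.inclA_mul_mem_spanAeA (star a))
    · exact of_generator (fun _ => J.e_mul_mem_spanAeA)
        (by simpa [J.e_sa] using fun _ => J.e_mul_mem_spanAeA)
  case algebraMap =>
    intro r y hy
    simp only [Algebra.algebraMap_eq_smul_one, smul_mul_assoc, one_mul, mul_smul_comm, mul_one]
    exact ⟨J.ideal.smul_mem r hy, J.ideal.smul_mem r hy⟩
  case add =>
    intro x x' hx hx' y hy
    rw [add_mul, mul_add]
    exact ⟨add_mem (hx y hy).1 (hx' y hy).1, add_mem (hx y hy).2 (hx' y hy).2⟩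
  case mul =>
    intro x x' hx hx' y hy
    rw [mul_assoc, ← mul_assoc y]
    exact ⟨(hx _ (hx' y hy).1).1, (hx' _ (hx y hy).2).2⟩
  case star =>
    intro x hx y hy
    obtain ⟨h₁, h₂⟩ := hx _ (J.star_mem_ideal hy)
    have h₁' := J.star_mem_ideal h₁
    have h₂' := J.star_mem_ideal h₂
    rw [star_mul, star_star] at h₁' h₂'
    exact ⟨h₂', h₁'⟩

lemma mul_mem_ideal (z : 𝓑) {y : 𝓑} (hy : y ∈ J.ideal) : z * y ∈ J.ideal :=
  (J.mul_mem_ideal_and_mem_ideal_mul z y hy).1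

lemma mem_ideal_mul {y : 𝓑} (hy : y ∈ J.ideal) (z : 𝓑) : y * z ∈ J.ideal :=
  (J.mul_mem_ideal_and_mem_ideal_mul z y hy).2

lemma e_mul_mul_e_mem_closure_range_deMap {y : 𝓑} (hy : y ∈ J.ideal) :
    J.e * y * J.e ∈ closure (Set.range J.deMap) := by
  rw [← NonUnitalStarAlgHom.coe_range]
  refine map_mem_closure (f := fun u => J.e * u * J.e) (by fun_prop) hy fun v hv => ?_
  induction hv using Submodule.span_induction with
  | mem x hx =>
    obtain ⟨b, c, rfl⟩ := hx
    refine ⟨E.toMap b * E.toMap c, ?_⟩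
    calc J.deMap (E.toMap b * E.toMap c)
        = J.inclA (ι (E.toMap b)) * (J.inclA (ι (E.toMap c)) * J.e) := by
          rw [deMap_apply, map_mul, map_mul, mul_assoc]
      _ = (J.e * J.inclA b * J.e) * (J.inclA c * J.e) := by
          rw [J.rel b, mul_assoc, ← mul_assoc J.e, ← J.rel c]
      _ = J.e * (J.inclA b * J.e * J.inclA c) * J.e := by simp only [mul_assoc]
  | zero => exact ⟨0, by simp⟩
  | add x y _ _ hx hy => simpa [mul_add, add_mul] using add_mem hx hy
  | smul r x _ hx => simpa using SMulMemClass.smul_mem r hx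

/- For `y` in the ideal, `(e a y)(e a y)* = e (a y y* a*) e` lies in the closure of `De`, where
`ρ` is faithful; hence `e A y = 0`, so `y` is orthogonal to `A e A` and thus to itself. -/
lemma eq_zero_of_mem_ideal {C : Type*} [CStarAlgebra C] (ρ : 𝓑 →⋆ₐ[ℂ] C)
    (hDe : ∀ d, ρ (J.deMap d) = 0 → J.deMap d = 0) {y : 𝓑} (hy : y ∈ J.ideal) (hρy : ρ y = 0) :
    y = 0 := by
  have he : ∀ a : A, J.e * (J.inclA a * y) = 0 := by
    intro a
    set x := J.inclA a * y
    have hx : x * star x ∈ J.ideal := J.mem_ideal_mul (J.mul_mem_ideal _ hy) _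
    rw [← CStarRing.mul_star_self_eq_zero_iff, star_mul, J.e_sa, ← mul_assoc, mul_assoc J.e]
    refine NonUnitalStarAlgHom.eq_zero_of_mem_closure_range J.deMap (ρ : 𝓑 →⋆ₙₐ[ℂ] C) hDe
      (J.e_mul_mul_e_mem_closure_range_deMap hx) (by simp [x, hρy])
  have horth : J.spanAeA ≤ LinearMap.ker (LinearMap.mulLeft ℂ (star y)) := by
    refine Submodule.span_le.mpr ?_
    rintro _ ⟨b, c, rfl⟩
    have h := congrArg star (he (star b))
    simp only [star_mul, star_star, map_star, J.e_sa, star_zero] at h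
    simp [← mul_assoc, h]
  have hyy : star y * y = 0 :=
    J.spanAeA.topologicalClosure_minimal horth
      (isClosed_eq (continuous_const_mul _) continuous_const) hy
  exact (CStarRing.star_mul_self_eq_zero_iff y).mp hyy

lemma exists_retraction :
    ∃ σ : 𝓑 →⋆ₐ[ℂ] A, (∀ a, σ (J.inclA a) = a) ∧ σ J.e = 0 := by
  obtain ⟨σ, ⟨hσ, hσe⟩, -⟩ :=
    J.universal A (StarAlgHom.id ℂ A) 0 (star_zero _) (mul_zero _) (by simp)
  exact ⟨σ, DFunLike.congr_fun hσ, hσe⟩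

lemma e_mem_ideal : J.e ∈ J.ideal :=
  subset_closure (Submodule.subset_span ⟨1, 1, by simp⟩)

lemma sub_inclA_mem_ideal {σ : 𝓑 →⋆ₐ[ℂ] A} (hσ : ∀ a, σ (J.inclA a) = a) (hσe : σ J.e = 0)
    (x : 𝓑) : x - J.inclA (σ x) ∈ J.ideal := by
  refine J.generates.induction (p := fun x => x - J.inclA (σ x) ∈ J.ideal)
    (J.isClosed_ideal.preimage (by fun_prop)) ?_ ?_ ?_ ?_ ?_ x
  · rintro _ (⟨a, rfl⟩ | rfl)
    · simp [hσ]
    · simpa [hσe] using J.e_mem_ideal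
  · intro r
    rw [AlgHomClass.commutes, AlgHomClass.commutes, sub_self]
    exact zero_mem _
  · intro x y hx hy
    simpa [add_sub_add_comm] using add_mem hx hy
  · intro x y hx hy
    have key : x * y - J.inclA (σ (x * y)) =
        (x - J.inclA (σ x)) * y + J.inclA (σ x) * (y - J.inclA (σ y)) := by
      simp only [map_mul]; noncomm_ring
    rw [key]
    exact add_mem (J.mem_ideal_mul hx y) (J.mul_mem_ideal _ hy)
  · intro x hx
    simpa [map_star] using J.star_mem_ideal hx

lemma map_mem_closure_span_of_mem_ideal {C : Type*} [CStarAlgebra C] (ρ : 𝓑 →⋆ₐ[ℂ] C)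
    {y : 𝓑} (hy : y ∈ J.ideal) :
    ρ y ∈ closure ((Submodule.span ℂ
      {y : C | ∃ b c : A, y = ρ (J.inclA b * J.e * J.inclA c)} : Submodule ℂ C) : Set C) := by
  refine map_mem_closure (map_continuous ρ) hy fun v hv => ?_
  refine Submodule.span_le (p := (Submodule.span ℂ _).comap ρ.toAlgHom.toLinearMap) |>.mpr ?_ hv
  rintro _ ⟨b, c, rfl⟩
  exact Submodule.subset_span ⟨b, c, rfl⟩

end JonesExtension

theorem stmt_3_general {D A : Type u} [CStarAlgebra D] [CStarAlgebra A] (ι : D →⋆ₐ[ℂ] A)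
    (E : CondExp D A ι) (𝓑 : Type u) [CStarAlgebra 𝓑]
    (J : JonesExtension ι E 𝓑) (C : Type u) [CStarAlgebra C] (ρ : 𝓑 →⋆ₐ[ℂ] C)
    (hA : Function.Injective fun a : A => ρ (J.inclA a))
    (hDe : Set.InjOn ρ {x : 𝓑 | ∃ d : D, x = J.inclA (ι d) * J.e})
    (hzero : ∀ a : A,
      ρ (J.inclA a) ∈ closure ((Submodule.span ℂ
          {y : C | ∃ b c : A, y = ρ (J.inclA b * J.e * J.inclA c)} : Submodule ℂ C) : Set C) →
      ρ (J.inclA a) = 0) :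
    Function.Injective ρ := by
  have hDe' (d : D) (hd : ρ (J.deMap d) = 0) : J.deMap d = 0 :=
    hDe ⟨d, rfl⟩ ⟨0, by simp⟩ (by rwa [map_zero])
  obtain ⟨σ, hσ, hσe⟩ := J.exists_retraction
  refine (injective_iff_map_eq_zero ρ).mpr fun x hx => ?_
  set a := σ x
  have hy : x - J.inclA a ∈ J.ideal := J.sub_inclA_mem_ideal hσ hσe x
  have hρa : ρ (J.inclA a) = 0 := by
    refine hzero a ?_
    have h := (Submodule.span ℂ _).topologicalClosure.neg_mem
      (J.map_mem_closure_span_of_mem_ideal ρ hy)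
    rwa [map_sub, hx, zero_sub, neg_neg] at h
  have ha : a = 0 := hA (by simpa using hρa)
  rw [ha, map_zero, sub_zero] at hy
  exact J.eq_zero_of_mem_ideal ρ hDe' hy hx

theorem stmt_3 {D A : Type u} [CStarAlgebra D] [CStarAlgebra A] (ι : D →⋆ₐ[ℂ] A)
    (hι : Function.Injective ι) (E : CondExp D A ι) (𝓑 : Type u) [CStarAlgebra 𝓑]
    (J : JonesExtension ι E 𝓑) (C : Type u) [CStarAlgebra C] (ρ : 𝓑 →⋆ₐ[ℂ] C)
    (hA : Function.Injective fun a : A => ρ (J.inclA a))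
    (hDe : Set.InjOn ρ {x : 𝓑 | ∃ d : D, x = J.inclA (ι d) * J.e})
    (hzero : ∀ a : A,
      ρ (J.inclA a) ∈ closure ((Submodule.span ℂ
          {y : C | ∃ b c : A, y = ρ (J.inclA b * J.e * J.inclA c)} : Submodule ℂ C) : Set C) →
      ρ (J.inclA a) = 0) :
    Function.Injective ρ :=
  stmt_3_general ι E 𝓑 J C ρ hA hDe hzero

end
end
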